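/- arXiv:1511.03074 — 9 statements merged into one kernel-verified Lean document; each statement's English description precedes it below -/
import Mathlib

section
/- Let 0 < β' < β < 1. Then the β'-risk region R_𝒳(β') satisfies the β-aggregation condition: R_𝒳(β) ⊆ R_𝒳(β'), and for every x ∈ 𝒳 and every z' < F_x⁻¹(β) one has ℙ(Y ∈ {y : z' < f(x,y) ≤ F_x⁻¹(β)} ∩ R_𝒳(β')) > 0. -/
open MeasureTheory Set Filter
open scoped ENNReal

namespace RiskRegionAux

variable {Ω : Type*} [MeasurableSpace Ω]

/-- Nonemptiness of the superlevel set of the CDF. -/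
lemma Sne (ℙ : Measure Ω) [IsProbabilityMeasure ℙ] (g : Ω → ℝ)
    (γ : ℝ) (hγ1 : γ < 1) :
    {z : ℝ | γ ≤ (ℙ {ω | g ω ≤ z}).toReal}.Nonempty := by
  have hm : Monotone fun n : ℕ => {ω | g ω ≤ (n : ℝ)} := by
    intro a b hab ω (h : g ω ≤ a)
    exact h.trans (by exact_mod_cast hab)
  have hU : (⋃ n : ℕ, {ω | g ω ≤ (n : ℝ)}) = univ := by
    ext ω; simp only [mem_iUnion, mem_univ, iff_true, mem_setOf_eq]
    obtain ⟨n, hn⟩ := exists_nat_ge (g ω)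
    exact ⟨n, hn⟩
  have ht := tendsto_measure_iUnion_atTop (μ := ℙ) hm
  rw [hU, measure_univ] at ht
  have hlt : ENNReal.ofReal γ < 1 := by
    rw [← ENNReal.ofReal_one]
    exact ENNReal.ofReal_lt_ofReal_iff one_pos |>.2 hγ1
  obtain ⟨n, hn⟩ := (ht.eventually_mem (Ioi_mem_nhds hlt)).exists
  refine ⟨(n : ℝ), ?_⟩
  have : ENNReal.ofReal γ ≤ ℙ {ω | g ω ≤ (n : ℝ)} := le_of_lt hn
  exact (ENNReal.ofReal_le_iff_le_toReal (measure_ne_top _ _)).1 this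

/-- Bounded-belowness of the superlevel set of the CDF. -/
lemma Sbdd (ℙ : Measure Ω) [IsProbabilityMeasure ℙ] (g : Ω → ℝ) (hg : Measurable g)
    (γ : ℝ) (hγ0 : 0 < γ) :
    BddBelow {z : ℝ | γ ≤ (ℙ {ω | g ω ≤ z}).toReal} := by
  have hm : Antitone fun n : ℕ => {ω | g ω ≤ -(n : ℝ)} := by
    intro a b hab ω (h : g ω ≤ -(b : ℝ))
    exact h.trans (neg_le_neg (by exact_mod_cast hab))
  have hI : (⋂ n : ℕ, {ω | g ω ≤ -(n : ℝ)}) = ∅ := by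
    ext ω; simp only [mem_iInter, mem_empty_iff_false, iff_false, not_forall, mem_setOf_eq]
    obtain ⟨n, hn⟩ := exists_nat_gt (-(g ω))
    exact ⟨n, by push_neg; linarith⟩
  have ht := tendsto_measure_iInter_atTop (μ := ℙ)
    (s := fun n : ℕ => {ω | g ω ≤ -(n : ℝ)})
    (fun n => (hg measurableSet_Iic).nullMeasurableSet) hm ⟨0, measure_ne_top _ _⟩
  rw [hI, measure_empty] at ht
  have hpos : (0 : ℝ≥0∞) < ENNReal.ofReal γ := ENNReal.ofReal_pos.2 hγ0
  obtain ⟨n, hn⟩ := (ht.eventually_mem (Iio_mem_nhds hpos)).exists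
  refine ⟨-(n : ℝ), fun s hs => ?_⟩
  by_contra hcon
  push_neg at hcon
  have hsub : {ω | g ω ≤ s} ⊆ {ω | g ω ≤ -(n : ℝ)} :=
    fun ω (h : g ω ≤ s) => h.trans hcon.le
  have h1 : ℙ {ω | g ω ≤ s} < ENNReal.ofReal γ := lt_of_le_of_lt (measure_mono hsub) hn
  have h2 : (ℙ {ω | g ω ≤ s}).toReal < γ :=
    (ENNReal.lt_ofReal_iff_toReal_lt (measure_ne_top _ _)).1 h1
  exact absurd hs (not_le.2 h2)

/-- The CDF at the quantile is at least `γ` (right-continuity). -/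
lemma cdf_quantile_ge (ℙ : Measure Ω) [IsProbabilityMeasure ℙ] (g : Ω → ℝ) (hg : Measurable g)
    (γ : ℝ) (hγ0 : 0 < γ) (hγ1 : γ < 1) :
    ENNReal.ofReal γ ≤ ℙ {ω | g ω ≤ sInf {z : ℝ | γ ≤ (ℙ {ω | g ω ≤ z}).toReal}} := by
  set S := {z : ℝ | γ ≤ (ℙ {ω | g ω ≤ z}).toReal} with hS
  set qv := sInf S with hqv
  have hm : Antitone fun n : ℕ => {ω | g ω ≤ qv + 1 / ((n : ℝ) + 1)} := by
    intro a b hab ω (h : g ω ≤ qv + 1 / ((b : ℝ) + 1))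
    have : (1 : ℝ) / ((b : ℝ) + 1) ≤ 1 / ((a : ℝ) + 1) :=
      one_div_le_one_div_of_le (by positivity)
        (by have : (a : ℝ) ≤ (b : ℝ) := Nat.cast_le.2 hab; linarith)
    exact h.trans (by linarith)
  have hI : (⋂ n : ℕ, {ω | g ω ≤ qv + 1 / ((n : ℝ) + 1)}) = {ω | g ω ≤ qv} := by
    ext ω
    simp only [mem_iInter, mem_setOf_eq]
    constructor
    · intro h
      refine le_of_forall_pos_le_add fun ε hε => ?_
      obtain ⟨n, hn⟩ := exists_nat_one_div_lt hε
      exact (h n).trans (by linarith)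
    · intro h n
      have : (0 : ℝ) < 1 / ((n : ℝ) + 1) := by positivity
      linarith
  have ht := tendsto_measure_iInter_atTop (μ := ℙ)
    (s := fun n : ℕ => {ω | g ω ≤ qv + 1 / ((n : ℝ) + 1)})
    (fun n => (hg measurableSet_Iic).nullMeasurableSet) hm ⟨0, measure_ne_top _ _⟩
  rw [hI] at ht
  refine ge_of_tendsto ht (Eventually.of_forall fun n => ?_)
  have hq_lt : qv < qv + 1 / ((n : ℝ) + 1) := by
    have : (0 : ℝ) < 1 / ((n : ℝ) + 1) := by positivity
    linarith
  obtain ⟨s, hsS, hs⟩ := exists_lt_of_csInf_lt (Sne ℙ g γ hγ1) hq_lt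
  have hsub : {ω | g ω ≤ s} ⊆ {ω | g ω ≤ qv + 1 / ((n : ℝ) + 1)} :=
    fun ω (h : g ω ≤ s) => h.trans hs.le
  calc ENNReal.ofReal γ ≤ ℙ {ω | g ω ≤ s} :=
        (ENNReal.ofReal_le_iff_le_toReal (measure_ne_top _ _)).2 hsS
    _ ≤ _ := measure_mono hsub

/-- The measure of the strict sublevel set of the quantile is at most `γ`. -/
lemma measure_lt_quantile_le (ℙ : Measure Ω) [IsProbabilityMeasure ℙ] (g : Ω → ℝ)
    (hg : Measurable g) (γ : ℝ) (hγ0 : 0 < γ) :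
    ℙ {ω | g ω < sInf {z : ℝ | γ ≤ (ℙ {ω | g ω ≤ z}).toReal}} ≤ ENNReal.ofReal γ := by
  set S := {z : ℝ | γ ≤ (ℙ {ω | g ω ≤ z}).toReal} with hS
  set qv := sInf S with hqv
  have hm : Monotone fun n : ℕ => {ω | g ω ≤ qv - 1 / ((n : ℝ) + 1)} := by
    intro a b hab ω (h : g ω ≤ qv - 1 / ((a : ℝ) + 1))
    have : (1 : ℝ) / ((b : ℝ) + 1) ≤ 1 / ((a : ℝ) + 1) :=
      one_div_le_one_div_of_le (by positivity)
        (by have : (a : ℝ) ≤ (b : ℝ) := Nat.cast_le.2 hab; linarith)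
    exact h.trans (by linarith)
  have hU : (⋃ n : ℕ, {ω | g ω ≤ qv - 1 / ((n : ℝ) + 1)}) = {ω | g ω < qv} := by
    ext ω
    simp only [mem_iUnion, mem_setOf_eq]
    constructor
    · rintro ⟨n, hn⟩
      have : (0 : ℝ) < 1 / ((n : ℝ) + 1) := by positivity
      linarith
    · intro h
      obtain ⟨n, hn⟩ := exists_nat_one_div_lt (sub_pos.2 h)
      exact ⟨n, by linarith⟩
  have ht := tendsto_measure_iUnion_atTop (μ := ℙ) hm
  rw [hU] at ht
  refine le_of_tendsto ht (Eventually.of_forall fun n => ?_)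
  have hlt : qv - 1 / ((n : ℝ) + 1) < qv := by
    have : (0 : ℝ) < 1 / ((n : ℝ) + 1) := by positivity
    linarith
  have hnot : qv - 1 / ((n : ℝ) + 1) ∉ S := fun hmem =>
    absurd (csInf_le (Sbdd ℙ g hg γ hγ0) hmem) (not_le.2 hlt)
  have : (ℙ {ω | g ω ≤ qv - 1 / ((n : ℝ) + 1)}).toReal < γ := not_le.1 hnot
  exact le_of_lt ((ENNReal.lt_ofReal_iff_toReal_lt (measure_ne_top _ _)).2 this)

end RiskRegionAux

open RiskRegionAux

/-- For `0 < β' < β < 1`, the β'-risk region `R_𝒳(β')` satisfies the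
β-aggregation condition: it contains `R_𝒳(β)`, and for every `x ∈ 𝒳` and `z' < F_x⁻¹(β)`
the set `{y : z' < f(x,y) ≤ F_x⁻¹(β)} ∩ R_𝒳(β')` has positive probability under the law of Y. -/
theorem stmt_1 {d k : ℕ} {Ω : Type*} [MeasurableSpace Ω]
    (ℙ : Measure Ω) [IsProbabilityMeasure ℙ]
    (Y : Ω → (Fin d → ℝ)) (hY : Measurable Y)
    (𝒳 : Set (Fin k → ℝ)) (f : (Fin k → ℝ) → (Fin d → ℝ) → ℝ)
    (hf : ∀ x ∈ 𝒳, Measurable fun ω => f x (Y ω))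
    (β β' : ℝ) (hβ'0 : 0 < β') (hβ'β : β' < β) (hβ1 : β < 1)
    -- distribution function F_x and quantile functions q γ x = F_x⁻¹(γ)
    (F : (Fin k → ℝ) → ℝ → ℝ)
    (hF : ∀ x z, F x z = (ℙ {ω | f x (Y ω) ≤ z}).toReal)
    (q : ℝ → (Fin k → ℝ) → ℝ)
    (hq : ∀ γ x, q γ x = sInf {z : ℝ | γ ≤ F x z})
    -- risk regions R_𝒳(γ)
    (RX : ℝ → Set (Fin d → ℝ))
    (hRX : ∀ γ, RX γ = ⋃ x ∈ 𝒳, {y : Fin d → ℝ | q γ x ≤ f x y}) :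
    RX β ⊆ RX β' ∧
      ∀ x ∈ 𝒳, ∀ z' < q β x,
        0 < ℙ {ω | Y ω ∈ {y : Fin d → ℝ | z' < f x y ∧ f x y ≤ q β x} ∩ RX β'} := by
  have hβ0 : 0 < β := hβ'0.trans hβ'β
  have hβ'1 : β' < 1 := hβ'β.trans hβ1
  -- rewrite the superlevel sets
  have hSet : ∀ (γ : ℝ) (x : Fin k → ℝ),
      {z : ℝ | γ ≤ F x z} = {z : ℝ | γ ≤ (ℙ {ω | f x (Y ω) ≤ z}).toReal} := by
    intro γ x; ext z; simp [hF]
  -- quantile monotonicity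
  have hsub : ∀ x ∈ 𝒳, q β' x ≤ q β x := by
    intro x hx
    rw [hq, hq, hSet, hSet]
    refine csInf_le_csInf (Sbdd ℙ _ (hf x hx) β' hβ'0) (Sne ℙ _ β hβ1) ?_
    intro z hz
    exact le_trans hβ'β.le hz
  constructor
  · rw [hRX, hRX]
    intro y hy
    simp only [mem_iUnion, mem_setOf_eq] at hy ⊢
    obtain ⟨x, hx, hle⟩ := hy
    exact ⟨x, hx, (hsub x hx).trans hle⟩
  · intro x hx z' hz'
    set g := fun ω => f x (Y ω) with hgdef
    have hg : Measurable g := hf x hx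
    have hqβ : q β x = sInf {z : ℝ | β ≤ (ℙ {ω | g ω ≤ z}).toReal} := by
      rw [hq, hSet]
    have hqβ' : q β' x = sInf {z : ℝ | β' ≤ (ℙ {ω | g ω ≤ z}).toReal} := by
      rw [hq, hSet]
    -- CDF at the β-quantile is ≥ β
    have hcdf : ENNReal.ofReal β ≤ ℙ {ω | g ω ≤ q β x} := by
      rw [hqβ]; exact cdf_quantile_ge ℙ g hg β hβ0 hβ1
    -- measure below the β'-quantile ≤ β'
    have hlow : ℙ {ω | g ω < q β' x} ≤ ENNReal.ofReal β' := by
      rw [hqβ']; exact measure_lt_quantile_le ℙ g hg β' hβ'0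
    -- cdf at z' is < β
    have hz'cdf : ℙ {ω | g ω ≤ z'} < ENNReal.ofReal β := by
      have hnot : z' ∉ {z : ℝ | β ≤ (ℙ {ω | g ω ≤ z}).toReal} := by
        intro hmem
        have := csInf_le (Sbdd ℙ g hg β hβ0) hmem
        rw [← hqβ] at this
        exact absurd this (not_le.2 hz')
      have : (ℙ {ω | g ω ≤ z'}).toReal < β := not_le.1 hnot
      exact (ENNReal.lt_ofReal_iff_toReal_lt (measure_ne_top _ _)).2 this
    set B := {ω | g ω ≤ z'} ∪ {ω | g ω < q β' x} with hB
    have hBlt : ℙ B < ENNReal.ofReal β := by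
      rcases lt_or_ge z' (q β' x) with hc | hc
      · have : B = {ω | g ω < q β' x} := by
          apply union_eq_self_of_subset_left
          intro ω (h : g ω ≤ z')
          exact lt_of_le_of_lt h hc
        rw [this]
        exact lt_of_le_of_lt hlow (ENNReal.ofReal_lt_ofReal_iff hβ0 |>.2 hβ'β)
      · have : B = {ω | g ω ≤ z'} := by
          apply union_eq_self_of_subset_right
          intro ω (h : g ω < q β' x)
          exact le_trans h.le hc
        rw [this]
        exact hz'cdf
    have hlt : ℙ B < ℙ {ω | g ω ≤ q β x} := lt_of_lt_of_le hBlt hcdf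
    have hkey : {ω | g ω ≤ q β x} \ B ⊆
        {ω | Y ω ∈ {y : Fin d → ℝ | z' < f x y ∧ f x y ≤ q β x} ∩ RX β'} := by
      rintro ω ⟨h1, h2⟩
      simp only [hB, mem_union, mem_setOf_eq, not_or, not_le, not_lt] at h2
      refine ⟨⟨h2.1, h1⟩, ?_⟩
      rw [hRX]
      exact mem_iUnion₂.2 ⟨x, hx, h2.2⟩
    calc (0 : ENNReal) < ℙ {ω | g ω ≤ q β x} - ℙ B := tsub_pos_of_lt hlt
      _ ≤ ℙ ({ω | g ω ≤ q β x} \ B) := le_measure_diff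
      _ ≤ _ := measure_mono hkey
end

section
/- Let 𝒴 ⊆ ℝ^d be the support of Y, i.e. a closed set carrying the law of Y such that ℙ(Y ∈ U) > 0 for every open set U with U ∩ 𝒴 ≠ ∅. Suppose that: (i) int(𝒴) ∩ int(R_𝒳(β)) is connected; (ii) for each x ∈ 𝒳 the map y ↦ f(x,y) is continuous on ℝ^d; (iii) for each x ∈ 𝒳 there exists x' ∈ 𝒳 with int(𝒴) ∩ int(R_x(β) ∩ R_{x'}(β)) ≠ ∅ and int(𝒴) ∩ int(R_{x'}(β) \ R_x(β)) ≠ ∅. Then the risk region R_𝒳(β) satisfies the β-aggregation condition: for every x ∈ 𝒳 and every z' < F_x⁻¹(β), ℙ(Y ∈ {y : z' < f(x,y) ≤ F_x⁻¹(β)} ∩ R_𝒳(β)) > 0. -/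
open MeasureTheory Set

/-- If the support 𝒴 of Y and the risk region R_𝒳(β) satisfy: (i) the
intersection of their interiors is connected, (ii) each loss `y ↦ f(x,y)` is continuous,
(iii) for each x there is x' with the two interior-intersection conditions, then the risk
region `R_𝒳(β)` satisfies the β-aggregation condition. -/
theorem stmt_2 {d k : ℕ} {Ω : Type*} [MeasurableSpace Ω]
    (ℙ : Measure Ω) [IsProbabilityMeasure ℙ]
    (Y : Ω → (Fin d → ℝ)) (hY : Measurable Y)
    (𝒳 : Set (Fin k → ℝ)) (f : (Fin k → ℝ) → (Fin d → ℝ) → ℝ)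
    (β : ℝ) (hβ0 : 0 < β) (hβ1 : β < 1)
    -- distribution function F_x and quantile q x = F_x⁻¹(β)
    (F : (Fin k → ℝ) → ℝ → ℝ)
    (hF : ∀ x z, F x z = (ℙ {ω | f x (Y ω) ≤ z}).toReal)
    (q : (Fin k → ℝ) → ℝ)
    (hq : ∀ x, q x = sInf {z : ℝ | β ≤ F x z})
    -- 𝒴 is the support of Y: closed, carries the law of Y, and every open set meeting 𝒴
    -- has positive probability
    (𝒴 : Set (Fin d → ℝ)) (h𝒴closed : IsClosed 𝒴)
    (h𝒴carries : ℙ (Y ⁻¹' 𝒴) = 1)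
    (h𝒴pos : ∀ U : Set (Fin d → ℝ), IsOpen U → (U ∩ 𝒴).Nonempty → 0 < ℙ (Y ⁻¹' U))
    -- the risk region R_𝒳(β)
    (RX : Set (Fin d → ℝ))
    (hRX : RX = ⋃ x ∈ 𝒳, {y : Fin d → ℝ | q x ≤ f x y})
    -- (i) connectedness
    (hconn : IsConnected (interior 𝒴 ∩ interior RX))
    -- (ii) continuity of the loss in y
    (hcont : ∀ x ∈ 𝒳, Continuous fun y => f x y)
    -- (iii)
    (hiii : ∀ x ∈ 𝒳, ∃ x' ∈ 𝒳,
      (interior 𝒴 ∩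
        interior ({y : Fin d → ℝ | q x ≤ f x y} ∩ {y : Fin d → ℝ | q x' ≤ f x' y})).Nonempty ∧
      (interior 𝒴 ∩
        interior ({y : Fin d → ℝ | q x' ≤ f x' y} \ {y : Fin d → ℝ | q x ≤ f x y})).Nonempty) :
    ∀ x ∈ 𝒳, ∀ z' < q x,
      0 < ℙ {ω | Y ω ∈ {y : Fin d → ℝ | z' < f x y ∧ f x y ≤ q x} ∩ RX} := by

  intro x hx z' hz'
  obtain ⟨x', hx', ⟨a, ha𝒴, haR⟩, ⟨b, hb𝒴, hbR⟩⟩ := hiii x hx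
  -- a, b lie in S := interior 𝒴 ∩ interior RX
  set S := interior 𝒴 ∩ interior RX with hS
  have hsubRX : ∀ x₀ ∈ 𝒳, {y : Fin d → ℝ | q x₀ ≤ f x₀ y} ⊆ RX := by
    intro x₀ hx₀ y hy
    rw [hRX]
    exact mem_biUnion hx₀ hy
  have haS : a ∈ S := ⟨ha𝒴, interior_mono (fun y hy => hsubRX x hx hy.1) haR⟩
  have hbS : b ∈ S := ⟨hb𝒴, interior_mono (fun y hy => hsubRX x' hx' hy.1) hbR⟩
  have hfa : q x ≤ f x a := (interior_subset haR).1
  have hfb : f x b < q x := lt_of_not_ge (interior_subset hbR).2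
  -- intermediate value: find y0 ∈ S with z' < f x y0 < q x
  set t : ℝ := (max z' (f x b) + q x) / 2 with ht
  have hmax : max z' (f x b) < q x := max_lt hz' hfb
  have ht1 : z' < t := by
    have := le_max_left z' (f x b); simp only [ht]; linarith
  have ht2 : t < q x := by simp only [ht]; linarith
  have ht3 : f x b ≤ t := by
    have := le_max_right z' (f x b); simp only [ht]; linarith
  have htIcc : t ∈ Icc (f x b) (f x a) := ⟨ht3, le_trans ht2.le hfa⟩
  obtain ⟨y0, hy0S, hy0t⟩ :=
    hconn.isPreconnected.intermediate_value hbS haS ((hcont x hx).continuousOn) htIcc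
  -- the open set U
  set U : Set (Fin d → ℝ) := S ∩ (fun y => f x y) ⁻¹' Ioo z' (q x) with hU
  have hUopen : IsOpen U :=
    (isOpen_interior.inter isOpen_interior).inter (isOpen_Ioo.preimage (hcont x hx))
  have hy0U : y0 ∈ U := ⟨hy0S, by simp [hy0t, ht1, ht2]⟩
  have hUpos : 0 < ℙ (Y ⁻¹' U) :=
    h𝒴pos U hUopen ⟨y0, hy0U, interior_subset hy0S.1⟩
  refine lt_of_lt_of_le hUpos (measure_mono ?_)
  intro ω hω
  obtain ⟨⟨h𝒴ω, hRXω⟩, hlt, hlt'⟩ := hω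
  exact ⟨⟨hlt, hlt'.le⟩, interior_subset hRXω⟩
end

section
/- Let Y_1, Y_2, … be i.i.d. copies of Y with E[|Y|] < ∞, and let R ⊆ ℝ^d be measurable with ℙ(Y ∈ R) > 0 and ℙ(Y ∈ R^c) > 0. For each n let N(n) = min{m : #{i ≤ m : Y_i ∈ R} = n} be the effective sample size of aggregation sampling with n risk scenarios (which is finite almost surely). Then with probability 1, (1/(N(n) − n)) Σ_{i ≤ N(n), Y_i ∈ R^c} Y_i → E[Y | Y ∈ R^c] as n → ∞. -/
open MeasureTheory Set Filter ProbabilityTheory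
open scoped Classical Topology Finset

/-!
Apply the strong law of large numbers to the three functions `1_R`, `1_{Rᶜ}` and `y ↦ 1_{Rᶜ}(y) y`
of the samples: the proportions of samples in `R` and in `Rᶜ` tend to `ℙ(Y ∈ R) > 0` and
`ℙ(Y ∈ Rᶜ) > 0`, and the normalised sum over `Rᶜ` tends to `E[Y 1{Y ∈ Rᶜ}]`. The quotient of the
last two averages is the average over `Rᶜ`, which therefore converges along every sequence of
times tending to infinity. Since infinitely many samples land in `R`, the hitting times `N(n)`
are finite, tend to infinity, and exactly `N(n) - n` of the first `N(n)` samples lie in `Rᶜ`.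
-/

namespace Nat

variable {p : ℕ → Prop} [DecidablePred p]

lemma card_filter_range_not (m : ℕ) : #{i ∈ Finset.range m | ¬ p i} = m - count p m := by
  have h := Finset.card_filter_add_card_filter_not (s := Finset.range m) (p := p)
  rw [Finset.card_range, ← count_eq_card_filter_range] at h
  omega

lemma infinite_of_tendsto_inv_mul_count {q : ℝ} (hq : 0 < q)
    (h : Tendsto (fun m : ℕ => (m : ℝ)⁻¹ * count p m) atTop (𝓝 q)) :
    (Set.ofPred p).Infinite := by
  have hcount : Tendsto (fun m => (count p m : ℝ)) atTop atTop := by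
    refine (tendsto_natCast_atTop_atTop.atTop_mul_pos hq h).congr' ?_
    filter_upwards [eventually_ne_atTop 0] with m hm
    field_simp
  intro hfin
  obtain ⟨m, hm⟩ := (hcount.eventually_gt_atTop (#hfin.toFinset : ℝ)).exists
  exact absurd (count_le_card hfin m) (by exact_mod_cast hm.not_ge)

variable (hp : (Set.ofPred p).Infinite)
include hp

lemma count_sInf_count_eq (n : ℕ) : count p (sInf {m | count p m = n}) = n :=
  (Nat.sInf_mem ⟨nth p n, count_nth_of_infinite hp n⟩ : sInf {m | count p m = n} ∈ _)

lemma tendsto_sInf_count_eq_atTop : Tendsto (fun n => sInf {m | count p m = n}) atTop atTop :=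
  tendsto_atTop_mono (fun n => (count_sInf_count_eq hp n).symm.trans_le (count_le p)) tendsto_id

end Nat

lemma tendsto_inv_smul_of_tendsto_averages {E : Type*} [NormedAddCommGroup E] [NormedSpace ℝ E]
    {k : ℕ → ℝ} {s : ℕ → E} {r : ℝ} {a : E} (hr : r ≠ 0)
    (hk : Tendsto (fun m : ℕ => (m : ℝ)⁻¹ * k m) atTop (𝓝 r))
    (hs : Tendsto (fun m : ℕ => (m : ℝ)⁻¹ • s m) atTop (𝓝 a)) :
    Tendsto (fun m => (k m)⁻¹ • s m) atTop (𝓝 (r⁻¹ • a)) := by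
  refine ((hk.inv₀ hr).smul hs).congr' ?_
  filter_upwards [eventually_ne_atTop 0] with m hm
  rw [smul_smul, mul_inv, inv_inv, mul_comm, ← mul_assoc, inv_mul_cancel₀ (Nat.cast_ne_zero.2 hm),
    one_mul]

section StrongLaw

variable {Ω α E : Type*} [MeasurableSpace Ω] {P : Measure Ω} [MeasurableSpace α]
  {X : ℕ → Ω → α} {Y : Ω → α} {S : Set α} [DecidablePred (· ∈ S)]

theorem strong_law_ae_sum_filter [NormedAddCommGroup E] [NormedSpace ℝ E] [CompleteSpace E]
    [MeasurableSpace E] [BorelSpace E] (hindep : iIndepFun X P)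
    (hident : ∀ i, IdentDistrib (X i) Y P P) (hS : MeasurableSet S) {u : α → E}
    (hu : Measurable u) (hint : IntegrableOn (u ∘ Y) (Y ⁻¹' S) P) :
    ∀ᵐ ω ∂P, Tendsto (fun n : ℕ => (n : ℝ)⁻¹ • ∑ i ∈ Finset.range n with X i ω ∈ S, u (X i ω))
      atTop (𝓝 (∫ ω in Y ⁻¹' S, u (Y ω) ∂P)) := by
  have hv : Measurable (S.indicator u) := hu.indicator hS
  have hidentv : ∀ i, IdentDistrib (S.indicator u ∘ X i) (S.indicator u ∘ Y) P P :=
    fun i => (hident i).comp hv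
  have hYS : NullMeasurableSet (Y ⁻¹' S) P :=
    (hident 0).aemeasurable_snd.nullMeasurableSet_preimage hS
  have hcomp : S.indicator u ∘ Y = (Y ⁻¹' S).indicator (u ∘ Y) :=
    funext fun _ => (indicator_comp_right Y).symm
  have hintv : Integrable (S.indicator u ∘ X 0) P :=
    (hidentv 0).integrable_iff.2 (hcomp ▸ hint.integrable_indicator₀ hYS)
  filter_upwards [strong_law_ae _ hintv (fun i j hij => (hindep.indepFun hij).comp hv hv)
    (fun i => (hidentv i).trans (hidentv 0).symm)] with ω hω
  rw [(hidentv 0).integral_eq, hcomp, integral_indicator₀ hYS] at hω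
  simpa only [Finset.sum_filter, Function.comp_apply, indicator_apply] using hω

theorem strong_law_ae_card_filter [IsFiniteMeasure P] (hindep : iIndepFun X P)
    (hident : ∀ i, IdentDistrib (X i) Y P P) (hS : MeasurableSet S) :
    ∀ᵐ ω ∂P, Tendsto (fun n : ℕ => (n : ℝ)⁻¹ * #{i ∈ Finset.range n | X i ω ∈ S})
      atTop (𝓝 (P.real (Y ⁻¹' S))) := by
  filter_upwards [strong_law_ae_sum_filter (E := ℝ) hindep hident hS measurable_const
    (integrableOn_const (C := 1))] with ω hω
  simpa only [Finset.sum_const, nsmul_eq_mul, mul_one, smul_eq_mul, setIntegral_const] using hω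

end StrongLaw

theorem stmt_7_general {d : ℕ} {Ω : Type*} [MeasurableSpace Ω]
    (P : Measure Ω) [IsProbabilityMeasure P]
    (Y : Ω → (Fin d → ℝ)) (hYint : Integrable Y P)
    -- i.i.d. copies of Y
    (Yseq : ℕ → Ω → (Fin d → ℝ))
    (hIndep : iIndepFun Yseq P)
    (hIdent : ∀ i, IdentDistrib (Yseq i) Y P P)
    (R : Set (Fin d → ℝ)) (hR : MeasurableSet R)
    (hR0 : 0 < P (Y ⁻¹' R)) (hRc0 : 0 < P (Y ⁻¹' Rᶜ))
    -- effective sample size N(n): first m such that exactly n of the first m samples lie in R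
    (N : ℕ → Ω → ℕ)
    (hN : ∀ n ω, N n ω =
      sInf {m : ℕ | ((Finset.range m).filter fun i => Yseq i ω ∈ R).card = n}) :
    ∀ᵐ ω ∂P, Tendsto
      (fun n => ((N n ω - n : ℕ) : ℝ)⁻¹ •
        ∑ i ∈ (Finset.range (N n ω)).filter (fun i => Yseq i ω ∈ Rᶜ), Yseq i ω)
      atTop (nhds ((P (Y ⁻¹' Rᶜ)).toReal⁻¹ • ∫ ω' in Y ⁻¹' Rᶜ, Y ω' ∂P)) := by
  filter_upwards [strong_law_ae_card_filter hIndep hIdent hR,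
    strong_law_ae_card_filter hIndep hIdent hR.compl,
    strong_law_ae_sum_filter (u := id) hIndep hIdent hR.compl measurable_id hYint.integrableOn]
    with ω hin hout hsum
  set p : ℕ → Prop := fun i => Yseq i ω ∈ R
  have hNω : (N · ω) = fun n => sInf {m | Nat.count p m = n} := by
    simp only [hN, Nat.count_eq_card_filter_range, p]
  have hp : (Set.ofPred p).Infinite := Nat.infinite_of_tendsto_inv_mul_count
    (ENNReal.toReal_pos hR0.ne' (measure_ne_top _ _))
    (by simpa only [Nat.count_eq_card_filter_range, p, measureReal_def] using hin)
  have hcompl : ∀ n, #{i ∈ Finset.range (N n ω) | Yseq i ω ∈ Rᶜ} = N n ω - n := fun n => by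
    have hcount : Nat.count p (N n ω) = n := congrFun hNω n ▸ Nat.count_sInf_count_eq hp n
    have h := Nat.card_filter_range_not (p := p) (N n ω)
    rw [hcount] at h
    simpa only [mem_compl_iff, p] using h
  have hNtop : Tendsto (N · ω) atTop atTop := hNω ▸ Nat.tendsto_sInf_count_eq_atTop hp
  simp only [← hcompl]
  exact (tendsto_inv_smul_of_tendsto_averages
    (ENNReal.toReal_pos hRc0.ne' (measure_ne_top _ _)).ne' hout hsum).comp hNtop

/-- In aggregation sampling with i.i.d. samples `Y_1, Y_2, …` of an integrable
random vector `Y`, the average of the samples falling in `Rᶜ` among the first `N(n)` samples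
converges almost surely to `E[Y | Y ∈ Rᶜ]` as the number `n` of risk scenarios tends to ∞,
where `N(n)` is the first time `n` samples have landed in `R`. -/
theorem stmt_7 {d : ℕ} {Ω : Type*} [MeasurableSpace Ω]
    (P : Measure Ω) [IsProbabilityMeasure P]
    (Y : Ω → (Fin d → ℝ)) (hY : Measurable Y) (hYint : Integrable Y P)
    -- i.i.d. copies of Y
    (Yseq : ℕ → Ω → (Fin d → ℝ)) (hYseqMeas : ∀ i, Measurable (Yseq i))
    (hIndep : iIndepFun Yseq P)
    (hIdent : ∀ i, IdentDistrib (Yseq i) Y P P)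
    (R : Set (Fin d → ℝ)) (hR : MeasurableSet R)
    (hR0 : 0 < P (Y ⁻¹' R)) (hRc0 : 0 < P (Y ⁻¹' Rᶜ))
    -- effective sample size N(n): first m such that exactly n of the first m samples lie in R
    (N : ℕ → Ω → ℕ)
    (hN : ∀ n ω, N n ω =
      sInf {m : ℕ | ((Finset.range m).filter fun i => Yseq i ω ∈ R).card = n}) :
    ∀ᵐ ω ∂P, Tendsto
      (fun n => ((N n ω - n : ℕ) : ℝ)⁻¹ •
        ∑ i ∈ (Finset.range (N n ω)).filter (fun i => Yseq i ω ∈ Rᶜ), Yseq i ω)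
      atTop (nhds ((P (Y ⁻¹' Rᶜ)).toReal⁻¹ • ∫ ω' in Y ⁻¹' Rᶜ, Y ω' ∂P)) :=
  stmt_7_general P Y hYint Yseq hIndep hIdent R hR hR0 hRc0 N hN
end

section
/- Suppose the loss function f : 𝒳 × ℝ^d → ℝ is monotonic increasing, i.e. for all x ∈ 𝒳, y < ỹ componentwise implies f(x,y) < f(x,ỹ). Then the set R = { y ∈ ℝ^d : ℙ(Y > y) ≤ 1 − β } is a conservative risk region: for every y ∉ R (i.e. with ℙ(Y > y) > 1 − β) and every x ∈ 𝒳, one has F_x(f(x,y)) < β, so R ⊇ R_𝒳(β). -/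
open MeasureTheory Set Filter Topology
open ProbabilityTheory (cdf cdf_eq_real monotone_cdf tendsto_cdf_atTop)

/-! Monotonicity makes `{f(x,Y) ≤ f(x,y)}` disjoint from `{Y > y}`, so
`F_x(f(x,y)) ≤ 1 - ℙ(Y > y)`, which is `< β` off `R`. On the other hand a point of the risk
region satisfies `F_x⁻¹(β) ≤ f(x,y)`, and right-continuity of the distribution function gives
`β ≤ F_x(f(x,y))`. -/

lemma measureReal_add_measureReal_le_one {α : Type*} [MeasurableSpace α] {μ : Measure α}
    [IsProbabilityMeasure μ] {s t : Set α} (hd : Disjoint s t) (hs : MeasurableSet s) :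
    μ.real s + μ.real t ≤ 1 := by
  rw [← measureReal_union' hd hs]
  exact measureReal_le_one

lemma cdf_map_eq_measureReal {Ω : Type*} [MeasurableSpace Ω] {μ : Measure Ω} {g : Ω → ℝ}
    (hg : Measurable g) [IsProbabilityMeasure (μ.map g)] (z : ℝ) :
    cdf (μ.map g) z = μ.real {ω | g ω ≤ z} := by
  rw [cdf_eq_real, map_measureReal_apply hg measurableSet_Iic]
  rfl

/-- `β < 1` makes the set nonempty; otherwise `sInf` would be the junk value `0`. -/
lemma le_cdf_of_sInf_le (μ : Measure ℝ) [IsProbabilityMeasure μ] {β t : ℝ} (hβ : β < 1)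
    (ht : sInf {z | β ≤ cdf μ z} ≤ t) : β ≤ cdf μ t := by
  have hne : {z | β ≤ cdf μ z}.Nonempty :=
    ((tendsto_cdf_atTop μ).eventually_const_lt hβ).exists.imp fun _ h => h.le
  have hright : ∀ z, t < z → β ≤ cdf μ z := fun z hz => by
    obtain ⟨s, hs, hsz⟩ := exists_lt_of_csInf_lt hne (ht.trans_lt hz)
    exact hs.trans (monotone_cdf μ hsz.le)
  have hlim : Tendsto (cdf μ) (𝓝[>] t) (𝓝 (cdf μ t)) :=
    ((cdf μ).right_continuous t).mono Ioi_subset_Ici_self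
  exact ge_of_tendsto hlim (eventually_nhdsWithin_of_forall hright)

lemma measureReal_le_le_one_sub_measureReal_gt {Ω ι : Type*} [MeasurableSpace Ω]
    (μ : Measure Ω) [IsProbabilityMeasure μ] (Y : Ω → ι → ℝ) {g : (ι → ℝ) → ℝ}
    (hgY : Measurable fun ω => g (Y ω)) (y : ι → ℝ)
    (hg : ∀ ytilde : ι → ℝ, (∀ i, y i < ytilde i) → g y < g ytilde) :
    μ.real {ω | g (Y ω) ≤ g y} ≤ 1 - μ.real {ω | ∀ i, y i < Y ω i} := by
  have hd : Disjoint {ω | g (Y ω) ≤ g y} {ω | ∀ i, y i < Y ω i} :=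
    Set.disjoint_left.2 fun ω hle hgt => (hg (Y ω) hgt).not_ge hle
  linarith [measureReal_add_measureReal_le_one (μ := μ) hd (hgY measurableSet_Iic)]

theorem stmt_9_general {d k : ℕ} {Ω : Type*} [MeasurableSpace Ω]
    (ℙ : Measure Ω) [IsProbabilityMeasure ℙ]
    (Y : Ω → (Fin d → ℝ))
    (𝒳 : Set (Fin k → ℝ)) (f : (Fin k → ℝ) → (Fin d → ℝ) → ℝ)
    (hf : ∀ x ∈ 𝒳, Measurable fun ω => f x (Y ω))
    (hmono : ∀ x ∈ 𝒳, ∀ y ytilde : Fin d → ℝ, (∀ i, y i < ytilde i) → f x y < f x ytilde)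
    (β : ℝ) (hβ1 : β < 1)
    (F : (Fin k → ℝ) → ℝ → ℝ)
    (hF : ∀ x z, F x z = (ℙ {ω | f x (Y ω) ≤ z}).toReal)
    (q : (Fin k → ℝ) → ℝ)
    (hq : ∀ x, q x = sInf {z : ℝ | β ≤ F x z})
    (R : Set (Fin d → ℝ))
    (hR : R = {y : Fin d → ℝ | (ℙ {ω | ∀ i, y i < Y ω i}).toReal ≤ 1 - β}) :
    (∀ y : Fin d → ℝ, 1 - β < (ℙ {ω | ∀ i, y i < Y ω i}).toReal →
      ∀ x ∈ 𝒳, F x (f x y) < β) ∧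
    (⋃ x ∈ 𝒳, {y : Fin d → ℝ | q x ≤ f x y}) ⊆ R := by
  have hF_cdf : ∀ x ∈ 𝒳, ∀ z, F x z = cdf (ℙ.map fun ω => f x (Y ω)) z := fun x hx z => by
    have := Measure.isProbabilityMeasure_map (μ := ℙ) (hf x hx).aemeasurable
    rw [hF, cdf_map_eq_measureReal (hf x hx)]
    rfl
  have outside : ∀ y : Fin d → ℝ, 1 - β < (ℙ {ω | ∀ i, y i < Y ω i}).toReal →
      ∀ x ∈ 𝒳, F x (f x y) < β := fun y hy x hx => by
    have := measureReal_le_le_one_sub_measureReal_gt ℙ Y (hf x hx) y (hmono x hx y)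
    rw [hF]
    exact this.trans_lt (by rw [measureReal_def]; linarith)
  refine ⟨outside, fun y hy => ?_⟩
  obtain ⟨x, hx, hqx⟩ : ∃ x ∈ 𝒳, q x ≤ f x y := by simpa using hy
  have := Measure.isProbabilityMeasure_map (μ := ℙ) (hf x hx).aemeasurable
  have hβF : β ≤ F x (f x y) := by
    rw [hF_cdf x hx]
    refine le_cdf_of_sInf_le _ hβ1 ?_
    simpa only [hq, hF_cdf x hx] using hqx
  rw [hR]
  exact le_of_not_gt fun hlt => (outside y hlt x hx).not_ge hβF

/-- If the loss function `f` is monotonic increasing, then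
`R = {y : ℙ(Y > y) ≤ 1 − β}` is a conservative risk region: for every `y ∉ R` and every
`x ∈ 𝒳`, `F_x(f(x,y)) < β`; consequently `R_𝒳(β) ⊆ R`. -/
theorem stmt_9 {d k : ℕ} {Ω : Type*} [MeasurableSpace Ω]
    (ℙ : Measure Ω) [IsProbabilityMeasure ℙ]
    (Y : Ω → (Fin d → ℝ)) (hY : Measurable Y)
    (𝒳 : Set (Fin k → ℝ)) (f : (Fin k → ℝ) → (Fin d → ℝ) → ℝ)
    (hf : ∀ x ∈ 𝒳, Measurable fun ω => f x (Y ω))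
    (hmono : ∀ x ∈ 𝒳, ∀ y ytilde : Fin d → ℝ, (∀ i, y i < ytilde i) → f x y < f x ytilde)
    (β : ℝ) (hβ0 : 0 < β) (hβ1 : β < 1)
    (F : (Fin k → ℝ) → ℝ → ℝ)
    (hF : ∀ x z, F x z = (ℙ {ω | f x (Y ω) ≤ z}).toReal)
    (q : (Fin k → ℝ) → ℝ)
    (hq : ∀ x, q x = sInf {z : ℝ | β ≤ F x z})
    (R : Set (Fin d → ℝ))
    (hR : R = {y : Fin d → ℝ | (ℙ {ω | ∀ i, y i < Y ω i}).toReal ≤ 1 - β}) :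
    (∀ y : Fin d → ℝ, 1 - β < (ℙ {ω | ∀ i, y i < Y ω i}).toReal →
      ∀ x ∈ 𝒳, F x (f x y) < β) ∧
    (⋃ x ∈ 𝒳, {y : Fin d → ℝ | q x ≤ f x y}) ⊆ R :=
  stmt_9_general ℙ Y 𝒳 f hf hmono β hβ1 F hF q hq R hR
end

section
/- Consider the portfolio selection loss f(x, y) = −xᵀy on 𝒳 × ℝ^d. Suppose the support of Y is all of ℝ^d, i.e. ℙ(Y ∈ U) > 0 for every nonempty open U ⊆ ℝ^d, and suppose there exist x₁, x₂ ∈ 𝒳 that are linearly independent. Then every set R with R_𝒳(β) ⊆ R ⊆ ℝ^d satisfies the β-aggregation condition: for every x ∈ 𝒳 and every z' < F_x⁻¹(β), ℙ(Y ∈ {y : z' < −xᵀy ≤ F_x⁻¹(β)} ∩ R) > 0. -/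
/-!
By the full-support assumption it suffices to find a nonempty open set inside
`{y | z' < -xᵀy ≤ q x} ∩ R`. For every feasible `x'`, `R` contains the open half-space
`{y | q x' < -x'ᵀy}`. If `x ≠ 0`, one of `x₁, x₂` is linearly independent of `x`; taking it as
`x'`, the map `y ↦ (xᵀy, x'ᵀy)` is onto `ℝ²`, so the open slab `{z' < -xᵀy < q x}` meets that
half-space. If `x = 0` the loss is the constant `0`, whose quantile is `0`, so the slab condition
holds everywhere and the half-space of `x₁` alone will do.
-/

open MeasureTheory Set Matrix

theorem Matrix.mulVec_surjective_of_linearIndependent_row {m n K : Type*} [Field K] [Fintype m]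
    [Fintype n] {M : Matrix m n K} (hM : LinearIndependent K M.row) :
    Function.Surjective M.mulVec := by
  have hrange : LinearMap.range M.mulVecLin = ⊤ := by
    apply Submodule.eq_top_of_finrank_eq
    rw [Module.finrank_fintype_fun_eq_card, ← hM.rank_matrix, Matrix.rank]
  exact LinearMap.range_eq_top.mp hrange

theorem exists_dotProduct_eq_of_linearIndependent {ι n K : Type*} [Field K] [Fintype ι]
    [Fintype n] {v : ι → n → K} (hv : LinearIndependent K v) (a : ι → K) :
    ∃ y : n → K, ∀ i, v i ⬝ᵥ y = a i := by
  obtain ⟨y, hy⟩ := Matrix.mulVec_surjective_of_linearIndependent_row (M := Matrix.of v) hv a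
  exact ⟨y, fun i => congrFun hy i⟩

theorem exists_dotProduct_pair_eq {n K : Type*} [Field K] [Fintype n] {x x' : n → K}
    (h : LinearIndependent K ![x, x']) (a b : K) : ∃ y, x ⬝ᵥ y = a ∧ x' ⬝ᵥ y = b := by
  obtain ⟨y, hy⟩ := exists_dotProduct_eq_of_linearIndependent h ![a, b]
  exact ⟨y, hy 0, hy 1⟩

theorem LinearIndependent.pair_left_or_right {K V : Type*} [Field K] [AddCommGroup V]
    [Module K V] {x₁ x₂ x : V} (h : LinearIndependent K ![x₁, x₂]) (hx : x ≠ 0) :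
    LinearIndependent K ![x, x₁] ∨ LinearIndependent K ![x, x₂] := by
  simp only [LinearIndependent.pair_iff' hx]
  by_contra! ⟨⟨a, rfl⟩, ⟨b, rfl⟩⟩
  have ha : a ≠ 0 := by rintro rfl; simpa using h.ne_zero 0
  refine (LinearIndependent.pair_iff' (h.ne_zero 0)).mp h (b / a) ?_
  simp [smul_smul, ha]

section Quantile

variable {Ω : Type*} [MeasurableSpace Ω]

noncomputable def lowerQuantile (μ : Measure Ω) (X : Ω → ℝ) (β : ℝ) : ℝ :=
  sInf {z | β ≤ (μ {ω | X ω ≤ z}).toReal}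

theorem lowerQuantile_const (μ : Measure Ω) [IsProbabilityMeasure μ] {β : ℝ} (hβ0 : 0 < β)
    (hβ1 : β ≤ 1) (c : ℝ) : lowerQuantile μ (fun _ => c) β = c := by
  have h : {z | β ≤ (μ {ω : Ω | c ≤ z}).toReal} = Ici c := by
    ext z
    by_cases hcz : c ≤ z <;> simp [hcz, hβ1, hβ0.not_ge]
  rw [lowerQuantile, h, csInf_Ici]

end Quantile

theorem stmt_10_general {d : ℕ} {Ω : Type*} [MeasurableSpace Ω]
    (ℙ : Measure Ω) [IsProbabilityMeasure ℙ]
    (Y : Ω → (Fin d → ℝ))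
    (𝒳 : Set (Fin d → ℝ))
    (β : ℝ) (hβ0 : 0 < β) (hβ1 : β < 1)
    -- distribution function and quantile of the loss −xᵀY
    (F : (Fin d → ℝ) → ℝ → ℝ)
    (hF : ∀ x z, F x z = (ℙ {ω | -(x ⬝ᵥ Y ω) ≤ z}).toReal)
    (q : (Fin d → ℝ) → ℝ)
    (hq : ∀ x, q x = sInf {z : ℝ | β ≤ F x z})
    -- the support of Y is all of ℝ^d
    (hsupp : ∀ U : Set (Fin d → ℝ), IsOpen U → U.Nonempty → 0 < ℙ (Y ⁻¹' U))
    -- two linearly independent feasible portfolios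
    (x₁ x₂ : Fin d → ℝ) (hx₁ : x₁ ∈ 𝒳) (hx₂ : x₂ ∈ 𝒳)
    (hli : LinearIndependent ℝ ![x₁, x₂])
    -- any set R containing the risk region R_𝒳(β)
    (R : Set (Fin d → ℝ))
    (hRX : (⋃ x ∈ 𝒳, {y : Fin d → ℝ | q x ≤ -(x ⬝ᵥ y)}) ⊆ R) :
    ∀ x ∈ 𝒳, ∀ z' < q x,
      0 < ℙ {ω | Y ω ∈ {y : Fin d → ℝ | z' < -(x ⬝ᵥ y) ∧ -(x ⬝ᵥ y) ≤ q x} ∩ R} := by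
  intro x hx z' hz'
  have hR : ∀ x' ∈ 𝒳, {y | q x' < -(x' ⬝ᵥ y)} ⊆ R :=
    fun x' hx' y hy => hRX (mem_biUnion hx' (show q x' ≤ -(x' ⬝ᵥ y) from hy.le))
  suffices ∃ U, IsOpen U ∧ U.Nonempty ∧ U ⊆ {y | z' < -(x ⬝ᵥ y) ∧ -(x ⬝ᵥ y) ≤ q x} ∩ R by
    obtain ⟨U, hUo, hUne, hU⟩ := this
    exact (hsupp U hUo hUne).trans_le (measure_mono fun ω hω => hU hω)
  rcases eq_or_ne x 0 with rfl | hx0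
  · have hq0 : q 0 = 0 := by
      simpa [hq, hF, lowerQuantile] using lowerQuantile_const ℙ hβ0 hβ1.le 0
    rw [hq0] at hz' ⊢
    obtain ⟨y, hy, -⟩ := exists_dotProduct_pair_eq hli (-(q x₁ + 1)) 0
    exact ⟨{y | q x₁ < -(x₁ ⬝ᵥ y)}, isOpen_lt continuous_const (by fun_prop),
      ⟨y, by simp [hy]⟩, fun y hy => ⟨by simpa using hz', hR x₁ hx₁ hy⟩⟩
  · obtain ⟨x', hx', hxx'⟩ : ∃ x' ∈ 𝒳, LinearIndependent ℝ ![x, x'] :=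
      (hli.pair_left_or_right hx0).elim (⟨x₁, hx₁, ·⟩) (⟨x₂, hx₂, ·⟩)
    obtain ⟨y, hy, hy'⟩ := exists_dotProduct_pair_eq hxx' (-((z' + q x) / 2)) (-(q x' + 1))
    refine ⟨{y | z' < -(x ⬝ᵥ y)} ∩ {y | -(x ⬝ᵥ y) < q x} ∩ {y | q x' < -(x' ⬝ᵥ y)},
      ((isOpen_lt continuous_const (by fun_prop)).inter
        (isOpen_lt (by fun_prop) continuous_const)).inter (isOpen_lt continuous_const (by fun_prop)),
      ⟨y, ?_⟩, fun y ⟨⟨h₁, h₂⟩, h₃⟩ => ⟨⟨h₁, h₂.le⟩, hR x' hx' h₃⟩⟩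
    refine ⟨⟨?_, ?_⟩, ?_⟩ <;> simp only [mem_ofPred_eq, hy, hy'] <;> linarith

/-- For the portfolio selection loss `f(x,y) = −xᵀy`, if the support of `Y` is
all of ℝ^d and 𝒳 contains two linearly independent portfolios, then every set `R` containing
the risk region `R_𝒳(β)` satisfies the β-aggregation condition. -/
theorem stmt_10 {d : ℕ} {Ω : Type*} [MeasurableSpace Ω]
    (ℙ : Measure Ω) [IsProbabilityMeasure ℙ]
    (Y : Ω → (Fin d → ℝ)) (hY : Measurable Y)
    (𝒳 : Set (Fin d → ℝ))
    (β : ℝ) (hβ0 : 0 < β) (hβ1 : β < 1)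
    -- distribution function and quantile of the loss −xᵀY
    (F : (Fin d → ℝ) → ℝ → ℝ)
    (hF : ∀ x z, F x z = (ℙ {ω | -(x ⬝ᵥ Y ω) ≤ z}).toReal)
    (q : (Fin d → ℝ) → ℝ)
    (hq : ∀ x, q x = sInf {z : ℝ | β ≤ F x z})
    -- the support of Y is all of ℝ^d
    (hsupp : ∀ U : Set (Fin d → ℝ), IsOpen U → U.Nonempty → 0 < ℙ (Y ⁻¹' U))
    -- two linearly independent feasible portfolios
    (x₁ x₂ : Fin d → ℝ) (hx₁ : x₁ ∈ 𝒳) (hx₂ : x₂ ∈ 𝒳)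
    (hli : LinearIndependent ℝ ![x₁, x₂])
    -- any set R containing the risk region R_𝒳(β)
    (R : Set (Fin d → ℝ))
    (hRX : (⋃ x ∈ 𝒳, {y : Fin d → ℝ | q x ≤ -(x ⬝ᵥ y)}) ⊆ R) :
    ∀ x ∈ 𝒳, ∀ z' < q x,
      0 < ℙ {ω | Y ω ∈ {y : Fin d → ℝ | z' < -(x ⬝ᵥ y) ∧ -(x ⬝ᵥ y) ≤ q x} ∩ R} :=
  stmt_10_general ℙ Y 𝒳 β hβ0 hβ1 F hF q hq hsupp x₁ x₂ hx₁ hx₂ hli R hRX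
end

section
/- Let K ⊆ ℝ^d be a nonempty closed convex cone, let α ≥ 0, and let p_K denote the Euclidean metric projection onto K. Then { y ∈ ℝ^d : ⟨x, y⟩ ≤ ‖x‖ α for all x ∈ K } = { y ∈ ℝ^d : ‖p_K(y)‖ ≤ α }. -/
open scoped RealInnerProductSpace

/-- If `K ⊆ ℝ^d` is a nonempty closed convex cone, `α ≥ 0`, and `p_K` is the
Euclidean metric projection onto `K`, then
`{y : ⟨x,y⟩ ≤ ‖x‖α for all x ∈ K} = {y : ‖p_K(y)‖ ≤ α}`. -/
theorem stmt_14 {d : ℕ} (K : Set (EuclideanSpace ℝ (Fin d)))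
    (hKne : K.Nonempty) (hKclosed : IsClosed K)
    (hKadd : ∀ x ∈ K, ∀ y ∈ K, x + y ∈ K)
    (hKsmul : ∀ c : ℝ, 0 ≤ c → ∀ x ∈ K, c • x ∈ K)
    (α : ℝ) (hα : 0 ≤ α)
    -- the metric projection onto K
    (pK : EuclideanSpace ℝ (Fin d) → EuclideanSpace ℝ (Fin d))
    (hpK : ∀ y, pK y ∈ K ∧ ∀ x ∈ K, ‖pK y - y‖ ≤ ‖x - y‖) :
    {y : EuclideanSpace ℝ (Fin d) | ∀ x ∈ K, ⟪x, y⟫ ≤ ‖x‖ * α} =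
      {y : EuclideanSpace ℝ (Fin d) | ‖pK y‖ ≤ α} := by
  have hconv : Convex ℝ K := by
    intro x hx y hy a b ha hb hab
    exact hKadd _ (hKsmul a ha x hx) _ (hKsmul b hb y hy)
  have h0 : (0 : EuclideanSpace ℝ (Fin d)) ∈ K := by
    obtain ⟨x, hx⟩ := hKne
    simpa using hKsmul 0 le_rfl x hx
  -- variational inequality
  have hvar : ∀ y, ∀ w ∈ K, ⟪y - pK y, w - pK y⟫ ≤ 0 := by
    intro y
    obtain ⟨hpmem, hpmin⟩ := hpK y
    haveI : Nonempty K := ⟨⟨pK y, hpmem⟩⟩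
    rw [← norm_eq_iInf_iff_real_inner_le_zero hconv hpmem]
    refine le_antisymm (le_ciInf fun w => ?_)
      (ciInf_le ⟨0, fun _ ⟨_, h⟩ => h ▸ norm_nonneg _⟩ (⟨pK y, hpmem⟩ : K))
    rw [norm_sub_rev, norm_sub_rev y]
    exact hpmin w w.2
  -- orthogonality: ⟪y - pK y, pK y⟫ = 0
  have horth : ∀ y, ⟪y - pK y, pK y⟫ = 0 := by
    intro y
    obtain ⟨hpmem, -⟩ := hpK y
    have h1 := hvar y ((2:ℝ) • pK y) (hKsmul 2 (by norm_num) _ hpmem)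
    have h2 := hvar y 0 h0
    rw [zero_sub, inner_neg_right] at h2
    have : (2:ℝ) • pK y - pK y = pK y := by
      rw [two_smul]; abel
    rw [this] at h1
    linarith
  -- obtuseness: ⟪y - pK y, x⟫ ≤ 0 for x ∈ K
  have hobt : ∀ y, ∀ x ∈ K, ⟪y - pK y, x⟫ ≤ 0 := by
    intro y x hx
    obtain ⟨hpmem, -⟩ := hpK y
    have h1 := hvar y (x + pK y) (hKadd x hx _ hpmem)
    simpa using h1
  ext y
  simp only [Set.mem_setOf_eq]
  constructor
  · intro h
    obtain ⟨hpmem, -⟩ := hpK y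
    have hy : ⟪pK y, y⟫ = ‖pK y‖ ^ 2 := by
      have := horth y
      rw [inner_sub_left] at this
      have h2 : ⟪pK y, pK y⟫ = (‖pK y‖ : ℝ) ^ 2 := real_inner_self_eq_norm_sq _
      rw [real_inner_comm] at this
      linarith
    have := h (pK y) hpmem
    rw [hy] at this
    rcases eq_or_lt_of_le (norm_nonneg (pK y)) with h0' | h0'
    · rw [← h0']; exact hα
    · nlinarith
  · intro h x hx
    have h1 := hobt y x hx
    rw [real_inner_comm] at h1
    have h2 : ⟪x, pK y⟫ ≤ ‖x‖ * ‖pK y‖ := real_inner_le_norm _ _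
    have h3 : ⟪x, y⟫ = ⟪x, y - pK y⟫ + ⟪x, pK y⟫ := by
      rw [← inner_add_right]; congr 1; abel
    have h4 : ‖x‖ * ‖pK y‖ ≤ ‖x‖ * α := by
      exact mul_le_mul_of_nonneg_left h (norm_nonneg _)
    linarith
end

section
/- Let K ⊆ ℝ^d be a nonempty closed convex cone, let P ∈ ℝ^{d×d} be a nonsingular matrix, and let α ≥ 0. Set K' = P(K) = {Px : x ∈ K} (a closed convex cone) and let p_{K'} denote the Euclidean metric projection onto K'. Then { y ∈ ℝ^d : ⟨x, y⟩ ≤ ‖Px‖ α for all x ∈ K } = Pᵀ( { ỹ ∈ ℝ^d : ‖p_{K'}(ỹ)‖ ≤ α } ), where Pᵀ(A) = {Pᵀa : a ∈ A}. -/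
open Matrix
open scoped RealInnerProductSpace

/-- Let `K ⊆ ℝ^d` be a nonempty closed convex cone, `P` a nonsingular `d×d`
matrix, `α ≥ 0`, `K' = P(K)` and `p_{K'}` the Euclidean metric projection onto `K'`. Then
`{y : ⟨x,y⟩ ≤ ‖Px‖α for all x ∈ K} = Pᵀ({ỹ : ‖p_{K'}(ỹ)‖ ≤ α})`. -/
theorem stmt_15 {d : ℕ} (K : Set (EuclideanSpace ℝ (Fin d)))
    (hKne : K.Nonempty) (hKclosed : IsClosed K)
    (hKadd : ∀ x ∈ K, ∀ y ∈ K, x + y ∈ K)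
    (hKsmul : ∀ c : ℝ, 0 ≤ c → ∀ x ∈ K, c • x ∈ K)
    (P : Matrix (Fin d) (Fin d) ℝ) (hP : IsUnit P.det)
    (α : ℝ) (hα : 0 ≤ α)
    -- K' = P(K)
    (K' : Set (EuclideanSpace ℝ (Fin d)))
    (hK' : K' = Matrix.toEuclideanLin P '' K)
    -- the metric projection onto K'
    (pK' : EuclideanSpace ℝ (Fin d) → EuclideanSpace ℝ (Fin d))
    (hpK' : ∀ y, pK' y ∈ K' ∧ ∀ x ∈ K', ‖pK' y - y‖ ≤ ‖x - y‖) :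
    {y : EuclideanSpace ℝ (Fin d) |
        ∀ x ∈ K, ⟪x, y⟫ ≤ ‖Matrix.toEuclideanLin P x‖ * α} =
      Matrix.toEuclideanLin Pᵀ '' {ytilde : EuclideanSpace ℝ (Fin d) | ‖pK' ytilde‖ ≤ α} := by
  set T := Matrix.toEuclideanLin P with hT
  set S := Matrix.toEuclideanLin Pᵀ with hS
  -- transpose = conjTranspose over ℝ
  have hPT : Pᵀ = Pᴴ := by
    ext i j; simp [Matrix.conjTranspose_apply]
  -- adjoint property
  have hadj : ∀ (x y : EuclideanSpace ℝ (Fin d)), ⟪x, S y⟫ = ⟪T x, y⟫ := by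
    intro x y
    have : S = LinearMap.adjoint T := by
      rw [hS, hPT, Matrix.toEuclideanLin_conjTranspose_eq_adjoint]
    rw [this]; exact LinearMap.adjoint_inner_right T x y
  -- surjectivity of S
  have hPTdet : IsUnit Pᵀ.det := by rwa [Matrix.det_transpose]
  have hSsurj : Function.Surjective S := by
    intro y
    refine ⟨Matrix.toEuclideanLin (Pᵀ)⁻¹ y, ?_⟩
    have h1 : Pᵀ * (Pᵀ)⁻¹ = 1 := Matrix.mul_nonsing_inv _ hPTdet
    rw [hS]
    simp only [Matrix.toEuclideanLin_apply, Equiv.apply_symm_apply,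
      Matrix.mulVec_mulVec, h1, Matrix.one_mulVec]
  -- K' is a convex cone containing 0
  have hK'add : ∀ x ∈ K', ∀ y ∈ K', x + y ∈ K' := by
    rintro _ hx _ hy
    rw [hK'] at hx hy ⊢
    obtain ⟨a, ha, rfl⟩ := hx
    obtain ⟨b, hb, rfl⟩ := hy
    exact ⟨a + b, hKadd a ha b hb, map_add _ _ _⟩
  have hK'smul : ∀ c : ℝ, 0 ≤ c → ∀ x ∈ K', c • x ∈ K' := by
    rintro c hc _ hx
    rw [hK'] at hx ⊢
    obtain ⟨a, ha, rfl⟩ := hx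
    exact ⟨c • a, hKsmul c hc a ha, map_smul _ _ _⟩
  have hK'conv : Convex ℝ K' := by
    intro x hx y hy a b ha hb _
    exact hK'add _ (hK'smul a ha x hx) _ (hK'smul b hb y hy)
  -- variational inequality for the projection
  have hVI : ∀ y : EuclideanSpace ℝ (Fin d), ∀ w ∈ K', ⟪y - pK' y, w - pK' y⟫ ≤ 0 := by
    intro y
    have hmem := (hpK' y).1
    have hne : Nonempty K' := ⟨⟨pK' y, hmem⟩⟩
    have hinf : ‖y - pK' y‖ = ⨅ w : K', ‖y - w‖ := by
      apply le_antisymm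
      · refine le_ciInf fun w => ?_
        calc ‖y - pK' y‖ = ‖pK' y - y‖ := norm_sub_rev _ _
          _ ≤ ‖(w : EuclideanSpace ℝ (Fin d)) - y‖ := (hpK' y).2 w w.2
          _ = ‖y - w‖ := norm_sub_rev _ _
      · exact ciInf_le ⟨0, fun r ⟨w, hw⟩ => hw ▸ norm_nonneg _⟩ (⟨pK' y, hmem⟩ : K')
    exact (norm_eq_iInf_iff_real_inner_le_zero hK'conv hmem).mp hinf
  -- orthogonality: ⟪y - pK' y, pK' y⟫ = 0
  have horth : ∀ y : EuclideanSpace ℝ (Fin d), ⟪y - pK' y, pK' y⟫ = 0 := by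
    intro y
    have hmem := (hpK' y).1
    have h2 := hVI y ((2 : ℝ) • pK' y) (hK'smul 2 (by norm_num) _ hmem)
    have h0 := hVI y 0 (by
      obtain ⟨x0, hx0⟩ := hKne
      have : (0 : EuclideanSpace ℝ (Fin d)) = (0 : ℝ) • x0 := by simp
      have h00 : (0 : EuclideanSpace ℝ (Fin d)) ∈ K := this ▸ hKsmul 0 le_rfl x0 hx0
      rw [hK']; exact ⟨0, h00, map_zero _⟩)
    have e2 : (2 : ℝ) • pK' y - pK' y = pK' y := by
      rw [two_smul]; abel
    rw [e2] at h2
    rw [zero_sub, inner_neg_right] at h0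
    linarith
  -- nonpositivity: ∀ w ∈ K', ⟪y - pK' y, w⟫ ≤ 0
  have hnonpos : ∀ y : EuclideanSpace ℝ (Fin d), ∀ w ∈ K', ⟪y - pK' y, w⟫ ≤ 0 := by
    intro y w hw
    have := hVI y w hw
    rw [inner_sub_right, horth y] at this
    linarith
  -- main proof
  ext y
  simp only [Set.mem_setOf_eq, Set.mem_image]
  constructor
  · intro hy
    obtain ⟨yt, rfl⟩ := hSsurj y
    refine ⟨yt, ?_, rfl⟩
    have hmem := (hpK' yt).1
    rw [hK'] at hmem
    obtain ⟨x, hxK, hx⟩ := hmem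
    have key : ‖pK' yt‖ ^ 2 ≤ ‖pK' yt‖ * α := by
      have h1 : ⟪pK' yt, yt⟫ = ‖pK' yt‖ ^ 2 := by
        have := horth yt
        rw [inner_sub_left, real_inner_comm] at this
        rw [← real_inner_self_eq_norm_sq]
        linarith
      have h2 : ⟪pK' yt, yt⟫ ≤ ‖pK' yt‖ * α := by
        calc ⟪pK' yt, yt⟫ = ⟪T x, yt⟫ := by rw [hx]
          _ = ⟪x, S yt⟫ := (hadj x yt).symm
          _ ≤ ‖T x‖ * α := hy x hxK
          _ = ‖pK' yt‖ * α := by rw [hx]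
      linarith
    rcases eq_or_lt_of_le (norm_nonneg (pK' yt)) with h | h
    · simp [← h, hα]
    · have := key
      rw [sq] at this
      exact le_of_mul_le_mul_left (by linarith [mul_le_mul_of_nonneg_left hα (le_of_lt h)]) h
        |>.trans le_rfl
  · rintro ⟨yt, hyt, rfl⟩ x hxK
    have hTx : T x ∈ K' := by rw [hK']; exact ⟨x, hxK, rfl⟩
    have h1 : ⟪T x, yt - pK' yt⟫ ≤ 0 := by
      rw [real_inner_comm]; exact hnonpos yt (T x) hTx
    have h2 : ⟪T x, pK' yt⟫ ≤ ‖T x‖ * ‖pK' yt‖ := real_inner_le_norm _ _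
    calc ⟪x, S yt⟫ = ⟪T x, yt⟫ := hadj x yt
      _ = ⟪T x, yt - pK' yt⟫ + ⟪T x, pK' yt⟫ := by rw [← inner_add_right, sub_add_cancel]
      _ ≤ ‖T x‖ * ‖pK' yt‖ := by linarith
      _ ≤ ‖T x‖ * α := mul_le_mul_of_nonneg_left hyt (norm_nonneg _)
end

section
/- Fix x̄ ∈ 𝒳 and z ∈ ℝ. Suppose the map x ↦ f(x, Y) is continuous at x̄ with probability 1, and that the distribution function F_{x̄} is continuous at z (equivalently ℙ(f(x̄, Y) = z) = 0). Then the map x ↦ F_x(z) = ℙ(f(x,Y) ≤ z) is continuous at x̄ (relative to 𝒳). -/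
open MeasureTheory Set Topology

/-- If `x ↦ f(x,Y)` is a.s. continuous at `x₀` (relative to 𝒳) and the
distribution function `F_{x₀}` is continuous at `z` (i.e. `ℙ(f(x₀,Y) = z) = 0`), then
`x ↦ F_x(z) = ℙ(f(x,Y) ≤ z)` is continuous at `x₀` (relative to 𝒳). -/
theorem stmt_17 {d k : ℕ} {Ω : Type*} [MeasurableSpace Ω]
    (ℙ : Measure Ω) [IsProbabilityMeasure ℙ]
    (Y : Ω → (Fin d → ℝ)) (hY : Measurable Y)
    (𝒳 : Set (Fin k → ℝ)) (f : (Fin k → ℝ) → (Fin d → ℝ) → ℝ)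
    (hfmeas : ∀ x ∈ 𝒳, Measurable fun ω => f x (Y ω))
    (x₀ : Fin k → ℝ) (hx₀ : x₀ ∈ 𝒳) (z : ℝ)
    (hcont : ∀ᵐ ω ∂ℙ, ContinuousWithinAt (fun x => f x (Y ω)) 𝒳 x₀)
    (hFcont : ℙ {ω | f x₀ (Y ω) = z} = 0) :
    ContinuousWithinAt (fun x => (ℙ {ω | f x (Y ω) ≤ z}).toReal) 𝒳 x₀ := by
  classical
  rw [ContinuousWithinAt, Filter.tendsto_iff_seq_tendsto]
  intro u hu
  -- replace u by a sequence inside 𝒳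
  set v : ℕ → (Fin k → ℝ) := fun n => if u n ∈ 𝒳 then u n else x₀ with hv
  have hv𝒳 : ∀ n, v n ∈ 𝒳 := by
    intro n; by_cases h : u n ∈ 𝒳 <;> simp [hv, h, hx₀]
  have huv : ∀ᶠ n in Filter.atTop, u n = v n := by
    filter_upwards [hu self_mem_nhdsWithin] with n hn
    exact (if_pos hn).symm
  have hvlim : Filter.Tendsto v Filter.atTop (𝓝[𝒳] x₀) := by
    apply tendsto_nhdsWithin_of_tendsto_nhds_of_eventually_within
    · exact ((hu.mono_right nhdsWithin_le_nhds).congr' huv)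
    · exact Filter.Eventually.of_forall hv𝒳
  have key : Filter.Tendsto (fun n => ℙ {ω | f (v n) (Y ω) ≤ z}) Filter.atTop
      (𝓝 (ℙ {ω | f x₀ (Y ω) ≤ z})) := by
    apply tendsto_measure_of_ae_tendsto_indicator_of_isFiniteMeasure Filter.atTop
      (measurableSet_le (hfmeas x₀ hx₀) measurable_const)
      (fun n => measurableSet_le (hfmeas (v n) (hv𝒳 n)) measurable_const)
    have hne : ∀ᵐ ω ∂ℙ, f x₀ (Y ω) ≠ z := by
      rw [MeasureTheory.ae_iff]
      simpa using hFcont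
    filter_upwards [hcont, hne] with ω hc hz
    have hlim : Filter.Tendsto (fun n => f (v n) (Y ω)) Filter.atTop (𝓝 (f x₀ (Y ω))) :=
      hc.tendsto.comp hvlim
    rcases lt_or_gt_of_ne hz with h | h
    · filter_upwards [hlim.eventually_lt_const h] with n hn
      exact ⟨fun _ => h.le, fun _ => hn.le⟩
    · filter_upwards [hlim.eventually_const_lt h] with n hn
      constructor
      · intro hle; exact absurd hle (not_le.mpr hn)
      · intro hle; exact absurd hle (not_le.mpr h)
  have := (ENNReal.tendsto_toReal (measure_ne_top ℙ _)).comp key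
  refine this.congr' ?_
  filter_upwards [huv] with n hn
  simp [Function.comp, hn]
end

section
/- Fix x̄ ∈ 𝒳 and 0 < β < 1. Suppose the map x ↦ f(x, Y) is continuous at x̄ with probability 1, the distribution function F_{x̄} is continuous at the β-quantile F_{x̄}⁻¹(β), and F_{x̄} is strictly increasing at F_{x̄}⁻¹(β), meaning that for every ε > 0, F_{x̄}(F_{x̄}⁻¹(β) − ε) < β < F_{x̄}(F_{x̄}⁻¹(β) + ε). Then the quantile map x ↦ F_x⁻¹(β) is continuous at x̄ (relative to 𝒳). -/
open MeasureTheory Set Filter Topology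

/-- Poor man's set-Fatou: if every point of `A` is eventually in `B n`, then any
`c < ℙ A` is eventually below `ℙ (B n)`. -/
lemma fatou_event {Ω : Type*} [MeasurableSpace Ω] (ℙ : Measure Ω)
    (B : ℕ → Set Ω) (A : Set Ω) (hA : ∀ ω ∈ A, ∀ᶠ n in atTop, ω ∈ B n)
    {c : ENNReal} (hc : c < ℙ A) : ∀ᶠ n in atTop, c < ℙ (B n) := by
  set D : ℕ → Set Ω := fun n => ⋂ k, ⋂ (_ : n ≤ k), B k with hD
  have hmono : Monotone D := by
    intro m n hmn
    exact Set.iInter₂_mono' (fun k hk => ⟨k, hmn.trans hk, le_rfl⟩)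
  have hsub : A ⊆ ⋃ n, D n := by
    intro ω hω
    obtain ⟨N, hN⟩ := (hA ω hω).exists_forall_of_atTop
    exact Set.mem_iUnion.2 ⟨N, Set.mem_iInter₂.2 fun k hk => hN k hk⟩
  have htend := tendsto_measure_iUnion_atTop (μ := ℙ) hmono
  have hc' : c < ℙ (⋃ n, D n) := hc.trans_le (measure_mono hsub)
  filter_upwards [htend.eventually (eventually_gt_nhds hc')] with n hn
  exact hn.trans_le (measure_mono (fun ω hω => Set.mem_iInter₂.1 hω n le_rfl))

/-- If `x ↦ f(x,Y)` is a.s. continuous at `x₀` (relative to 𝒳), `F_{x₀}` is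
continuous at its β-quantile and strictly increasing there (in the sense that
`F_{x₀}(F_{x₀}⁻¹(β) − ε) < β < F_{x₀}(F_{x₀}⁻¹(β) + ε)` for all `ε > 0`), then the quantile
map `x ↦ F_x⁻¹(β)` is continuous at `x₀` (relative to 𝒳). -/
theorem stmt_18 {d k : ℕ} {Ω : Type*} [MeasurableSpace Ω]
    (ℙ : Measure Ω) [IsProbabilityMeasure ℙ]
    (Y : Ω → (Fin d → ℝ)) (hY : Measurable Y)
    (𝒳 : Set (Fin k → ℝ)) (f : (Fin k → ℝ) → (Fin d → ℝ) → ℝ)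
    (hfmeas : ∀ x ∈ 𝒳, Measurable fun ω => f x (Y ω))
    (β : ℝ) (hβ0 : 0 < β) (hβ1 : β < 1)
    (F : (Fin k → ℝ) → ℝ → ℝ)
    (hF : ∀ x z, F x z = (ℙ {ω | f x (Y ω) ≤ z}).toReal)
    (q : (Fin k → ℝ) → ℝ)
    (hq : ∀ x, q x = sInf {z : ℝ | β ≤ F x z})
    (x₀ : Fin k → ℝ) (hx₀ : x₀ ∈ 𝒳)
    (hcont : ∀ᵐ ω ∂ℙ, ContinuousWithinAt (fun x => f x (Y ω)) 𝒳 x₀)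
    (hFcont : ContinuousAt (F x₀) (q x₀))
    (hstrict : ∀ ε > (0 : ℝ), F x₀ (q x₀ - ε) < β ∧ β < F x₀ (q x₀ + ε)) :
    ContinuousWithinAt (fun x => q x) 𝒳 x₀ := by
  rw [ContinuousWithinAt]
  apply Filter.tendsto_iff_seq_tendsto.mpr
  intro u hu
  set z := q x₀ with hz
  have hXmem : ∀ᶠ n in atTop, u n ∈ 𝒳 := hu.eventually eventually_mem_nhdsWithin
  have hcompl : ℙ {ω | ContinuousWithinAt (fun x => f x (Y ω)) 𝒳 x₀}ᶜ = 0 := by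
    rw [Set.compl_setOf]; exact (ae_iff.1 hcont)
  have hFmono : ∀ x w w', w ≤ w' → F x w ≤ F x w' := by
    intro x w w' h
    rw [hF, hF]
    exact ENNReal.toReal_mono (measure_ne_top _ _)
      (measure_mono (fun ω hω => le_trans hω h))
  have hFnonneg : ∀ x w, 0 ≤ F x w := fun x w => by rw [hF]; exact ENNReal.toReal_nonneg
  have key : ∀ ε > (0 : ℝ), ∀ᶠ n in atTop,
      β ≤ F (u n) (z + ε) ∧ F (u n) (z - ε) < β := by
    intro ε hε
    -- Upper part
    have hU : ∀ᶠ n in atTop,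
        ENNReal.ofReal β < ℙ {ω | f (u n) (Y ω) ≤ z + ε} := by
      apply fatou_event ℙ _ ({ω | f x₀ (Y ω) ≤ z + ε / 2} ∩
        {ω | ContinuousWithinAt (fun x => f x (Y ω)) 𝒳 x₀})
      · rintro ω ⟨hω1, hω2⟩
        simp only [Set.mem_setOf_eq] at hω1 hω2
        have htd : Tendsto (fun n => f (u n) (Y ω)) atTop (𝓝 (f x₀ (Y ω))) :=
          (hω2.tendsto).comp hu
        have hlt : f x₀ (Y ω) < z + ε := lt_of_le_of_lt hω1 (by linarith)
        filter_upwards [htd.eventually (eventually_lt_nhds hlt)] with n hn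
        exact hn.le
      · rw [measure_inter_conull hcompl]
        have hβlt : β < F x₀ (z + ε / 2) := (hstrict (ε / 2) (by linarith)).2
        rw [hF] at hβlt
        exact (ENNReal.ofReal_lt_iff_lt_toReal hβ0.le (measure_ne_top _ _)).2 hβlt
    -- Lower part
    have hL : ∀ᶠ n in atTop,
        ENNReal.ofReal (1 - β) < ℙ {ω | z - ε < f (u n) (Y ω)} := by
      apply fatou_event ℙ _ ({ω | z - ε / 2 < f x₀ (Y ω)} ∩
        {ω | ContinuousWithinAt (fun x => f x (Y ω)) 𝒳 x₀})
      · rintro ω ⟨hω1, hω2⟩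
        simp only [Set.mem_setOf_eq] at hω1 hω2
        have htd : Tendsto (fun n => f (u n) (Y ω)) atTop (𝓝 (f x₀ (Y ω))) :=
          (hω2.tendsto).comp hu
        have hlt : z - ε < f x₀ (Y ω) := by linarith
        exact htd.eventually (eventually_gt_nhds hlt)
      · rw [measure_inter_conull hcompl]
        have hS : {ω | z - ε / 2 < f x₀ (Y ω)} =
            {ω | f x₀ (Y ω) ≤ z - ε / 2}ᶜ := by
          ext ω; simp [not_le]
        have hmS : MeasurableSet {ω | f x₀ (Y ω) ≤ z - ε / 2} :=
          (hfmeas x₀ hx₀) measurableSet_Iic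
        rw [hS, prob_compl_eq_one_sub hmS]
        have hβlt : F x₀ (z - ε / 2) < β := (hstrict (ε / 2) (by linarith)).1
        have hrepr : ℙ {ω | f x₀ (Y ω) ≤ z - ε / 2} =
            ENNReal.ofReal (F x₀ (z - ε / 2)) := by
          rw [hF, ENNReal.ofReal_toReal (measure_ne_top _ _)]
        rw [hrepr]
        have h1 : (1 : ENNReal) = ENNReal.ofReal 1 := by simp
        rw [h1, ← ENNReal.ofReal_sub _ (hFnonneg x₀ _)]
        exact ENNReal.ofReal_lt_ofReal_iff_of_nonneg (by linarith) |>.2 (by linarith)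
    filter_upwards [hU, hL, hXmem] with n hn1 hn2 hn3
    constructor
    · -- β ≤ F (u n) (z + ε)
      rw [hF]
      exact le_of_lt ((ENNReal.ofReal_lt_iff_lt_toReal hβ0.le (measure_ne_top _ _)).1 hn1)
    · -- F (u n) (z - ε) < β
      have hmC : MeasurableSet {ω | f (u n) (Y ω) ≤ z - ε} :=
        (hfmeas (u n) hn3) measurableSet_Iic
      have hCc : {ω | z - ε < f (u n) (Y ω)} = {ω | f (u n) (Y ω) ≤ z - ε}ᶜ := by
        ext ω; simp [not_le]
      rw [hCc, prob_compl_eq_one_sub hmC] at hn2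
      have h1β : 1 - β < ((1 : ENNReal) - ℙ {ω | f (u n) (Y ω) ≤ z - ε}).toReal :=
        (ENNReal.ofReal_lt_iff_lt_toReal (by linarith)
          (by simp [ENNReal.sub_ne_top])).1 hn2
      rw [ENNReal.toReal_sub_of_le prob_le_one (by simp)] at h1β
      simp only [ENNReal.toReal_one] at h1β
      rw [hF]
      linarith
  refine tendsto_order.2 ⟨fun b hb => ?_, fun b hb => ?_⟩
  · have hε : (0 : ℝ) < (z - b) / 2 := by
      linarith [hb]
    filter_upwards [key _ hε] with n hn
    have hmem : z + (z - b) / 2 ∈ {w | β ≤ F (u n) w} := hn.1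
    have hlb : ∀ w ∈ {w | β ≤ F (u n) w}, z - (z - b) / 2 ≤ w := by
      intro w hw
      by_contra h
      push_neg at h
      exact absurd (le_trans hw (hFmono (u n) w (z - (z - b) / 2) h.le))
        (not_le.2 hn.2)
    have : z - (z - b) / 2 ≤ q (u n) := by
      rw [hq]
      exact le_csInf ⟨_, hmem⟩ hlb
    show b < q (u n)
    linarith
  · have hε : (0 : ℝ) < (b - z) / 2 := by linarith
    filter_upwards [key _ hε] with n hn
    have hmem : z + (b - z) / 2 ∈ {w | β ≤ F (u n) w} := hn.1
    have hlb : ∀ w ∈ {w | β ≤ F (u n) w}, z - (b - z) / 2 ≤ w := by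
      intro w hw
      by_contra h
      push_neg at h
      exact absurd (le_trans hw (hFmono (u n) w (z - (b - z) / 2) h.le))
        (not_le.2 hn.2)
    have : q (u n) ≤ z + (b - z) / 2 := by
      rw [hq]
      exact csInf_le ⟨z - (b - z) / 2, hlb⟩ hmem
    show q (u n) < b
    linarith
end
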